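/- For n ≥ 1, the descent generating polynomial of run-sorted permutations satisfies A_n(t) = 1 + ∑_{i=1}^{n-2} (C(n-1, i) − 1) t A_i(t), where A_n(t) = ∑_{σ ∈ RSP(n)} t^{des(σ)}. -/

import Mathlib

/-!
Cutting a run-sorted word `w` on a finite set `S ⊆ ℕ` after its first run: unless `w` is increasing,
what remains is a run-sorted word `v` on a set `T ⊆ S`, the first run is `S \ T` in increasing
order, and exactly one descent is lost. Conversely `(S \ T).sort ++ v` is run-sorted with first run
`(S \ T).sort` exactly when `T` avoids `min S` and is not the set of the `#T` largest elements of
`S`; there are `C(#S - 1, i) - 1` such `T` of size `i`. Since relabelling letters monotonically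
preserves runs, their lexicographic order and descents, the contribution of `v` depends only on
`#T`.
-/

/-- Lexicographic (≤) comparison of lists of naturals, as a `Bool`. -/
def lexLe : List ℕ → List ℕ → Bool
  | [], _ => true
  | _ :: _, [] => false
  | a :: as, b :: bs => decide (a < b) || (a == b && lexLe as bs)

/-- Split a word into its maximal (weakly) increasing runs. -/
def splitRuns : List ℕ → List (List ℕ)
  | [] => []
  | [x] => [[x]]
  | x :: y :: rest =>
    match splitRuns (y :: rest) with
    | [] => [[x]]
    | r :: rs => if x ≤ y then (x :: r) :: rs else [x] :: r :: rs

/-- Rearrange the maximal increasing runs of a word in lexicographic order. -/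
def runsort (w : List ℕ) : List ℕ := ((splitRuns w).mergeSort lexLe).flatten

/-- A word is run-sorted if its runs already appear in lexicographic order. -/
def IsRunSorted (w : List ℕ) : Prop := runsort w = w

instance : DecidablePred IsRunSorted := fun w => inferInstanceAs (Decidable (runsort w = w))

/-- The number of descents of a word: positions k (0-indexed) with w(k) > w(k+1). -/
def des (w : List ℕ) : ℕ := ((w.zip w.tail).filter fun p => decide (p.2 < p.1)).length

/-- The one-line notation word (with values 1,…,n) of a permutation of `Fin n`. -/
def permWord {n : ℕ} (σ : Equiv.Perm (Fin n)) : List ℕ := List.ofFn fun i => (σ i : ℕ) + 1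

/-- The descent generating polynomial of run-sorted permutations of `[n]`. -/
noncomputable def A (n : ℕ) : Polynomial ℝ :=
  ∑ σ ∈ Finset.univ.filter (fun σ : Equiv.Perm (Fin n) => IsRunSorted (permWord σ)),
    Polynomial.X ^ des (permWord σ)

open Finset Polynomial

theorem lexLe_iff_le : ∀ {a b : List ℕ}, lexLe a b = true ↔ a ≤ b
  | [], [] => by simp [lexLe]
  | [], b :: bs => by simpa [lexLe] using (List.nil_lt_cons b bs).le
  | _ :: _, [] => by simp [lexLe]
  | a :: as, b :: bs => by
    have h : a :: as < b :: bs ↔ a < b ∨ a = b ∧ as < bs := List.cons_lex_cons_iff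
    simp only [lexLe, Bool.or_eq_true, decide_eq_true_eq, Bool.and_eq_true, beq_iff_eq,
      lexLe_iff_le, le_iff_lt_or_eq, h, List.cons.injEq]
    tauto

theorem le_of_mem_head? {l : List ℕ} (hl : l.Pairwise (· ≤ ·)) {a x : ℕ} (ha : a ∈ l.head?)
    (hx : x ∈ l) : a ≤ x := by
  obtain ⟨t, rfl⟩ := List.head?_eq_some_iff.1 ha
  rcases List.mem_cons.1 hx with rfl | hx
  · exact le_rfl
  · exact List.rel_of_pairwise_cons hl hx

theorem le_of_mem_getLast? {l : List ℕ} (hl : l.Pairwise (· ≤ ·)) {a x : ℕ} (ha : a ∈ l.getLast?)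
    (hx : x ∈ l) : x ≤ a := by
  obtain ⟨t, rfl⟩ := List.getLast?_eq_some_iff.1 ha
  rw [List.pairwise_append] at hl
  rcases List.mem_append.1 hx with hx | hx
  · exact hl.2.2 x hx a (List.mem_singleton_self a)
  · exact (List.mem_singleton.1 hx).le

section Runs

theorem splitRuns_cons_cons_of_eq {x y : ℕ} {rest r : List ℕ} {rs : List (List ℕ)}
    (h : splitRuns (y :: rest) = r :: rs) :
    splitRuns (x :: y :: rest) = if x ≤ y then (x :: r) :: rs else [x] :: r :: rs := by
  rw [splitRuns, h]

theorem exists_splitRuns_cons (y : ℕ) :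
    ∀ rest : List ℕ, ∃ r rs, splitRuns (y :: rest) = (y :: r) :: rs
  | [] => ⟨[], [], rfl⟩
  | z :: rest => by
    obtain ⟨r, rs, h⟩ := exists_splitRuns_cons z rest
    rw [splitRuns_cons_cons_of_eq h]
    split_ifs
    exacts [⟨_, _, rfl⟩, ⟨_, _, rfl⟩]

theorem flatten_splitRuns : ∀ w : List ℕ, (splitRuns w).flatten = w
  | [] => rfl
  | [_] => rfl
  | x :: y :: rest => by
    obtain ⟨r, rs, h⟩ := exists_splitRuns_cons y rest
    have ih := flatten_splitRuns (y :: rest)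
    rw [h] at ih
    rw [splitRuns_cons_cons_of_eq h]
    split_ifs <;> simpa using ih

theorem mem_of_mem_splitRuns {w r : List ℕ} (hr : r ∈ splitRuns w) {x : ℕ} (hx : x ∈ r) :
    x ∈ w := by
  rw [← flatten_splitRuns w]
  exact List.mem_flatten.2 ⟨r, hr, hx⟩

theorem ne_nil_of_mem_splitRuns : ∀ {w r : List ℕ}, r ∈ splitRuns w → r ≠ []
  | [], _, h => by simp [splitRuns] at h
  | [_], _, h => by simp_all [splitRuns]
  | x :: y :: rest, r, h => by
    obtain ⟨s, rs, hs⟩ := exists_splitRuns_cons y rest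
    have ih : ∀ t ∈ (y :: s) :: rs, t ≠ [] := fun t ht => ne_nil_of_mem_splitRuns (hs ▸ ht)
    rw [splitRuns_cons_cons_of_eq hs] at h
    split_ifs at h <;> simp only [List.mem_cons] at h <;> grind

theorem isChain_of_mem_splitRuns : ∀ {w r : List ℕ}, r ∈ splitRuns w → r.IsChain (· ≤ ·)
  | [], _, h => by simp [splitRuns] at h
  | [_], _, h => by simp_all [splitRuns]
  | x :: y :: rest, r, h => by
    obtain ⟨s, rs, hs⟩ := exists_splitRuns_cons y rest
    have ih : ∀ t ∈ (y :: s) :: rs, t.IsChain (· ≤ ·) :=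
      fun t ht => isChain_of_mem_splitRuns (hs ▸ ht)
    rw [splitRuns_cons_cons_of_eq hs] at h
    split_ifs at h with hxy
    · rcases List.mem_cons.1 h with rfl | h
      · exact List.IsChain.cons_cons hxy (ih _ List.mem_cons_self)
      · exact ih r (List.mem_cons_of_mem _ h)
    · rcases List.mem_cons.1 h with rfl | h
      · exact List.isChain_singleton x
      · exact ih r h

theorem pairwise_of_mem_splitRuns {w r : List ℕ} (hr : r ∈ splitRuns w) :
    r.Pairwise (· ≤ ·) :=
  List.isChain_iff_pairwise.1 (isChain_of_mem_splitRuns hr)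

def LastGtHead (r s : List ℕ) : Prop := ∀ a ∈ r.getLast?, ∀ b ∈ s.head?, b < a

theorem isChain_lastGtHead_splitRuns : ∀ w : List ℕ, (splitRuns w).IsChain LastGtHead
  | [] => List.IsChain.nil
  | [_] => List.isChain_singleton _
  | x :: y :: rest => by
    obtain ⟨r, rs, h⟩ := exists_splitRuns_cons y rest
    have ih := isChain_lastGtHead_splitRuns (y :: rest)
    rw [h] at ih
    rw [splitRuns_cons_cons_of_eq h]
    split_ifs with hxy
    · refine List.isChain_cons.2 ⟨fun s hs => ?_, (List.isChain_cons.1 ih).2⟩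
      simpa [LastGtHead, List.getLast?_cons_cons] using (List.isChain_cons.1 ih).1 s hs
    · exact List.IsChain.cons_cons (by simp [LastGtHead]; omega) ih

theorem splitRuns_append : ∀ {r : List ℕ} (w : List ℕ), r ≠ [] → r.IsChain (· ≤ ·) →
    LastGtHead r w → splitRuns (r ++ w) = r :: splitRuns w
  | [x], [], _, _, _ => rfl
  | [x], y :: rest, _, _, hd => by
    obtain ⟨s, rs, h⟩ := exists_splitRuns_cons y rest
    have hyx : y < x := hd x rfl y rfl
    rw [List.singleton_append, splitRuns_cons_cons_of_eq h, if_neg (by omega), h]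
  | x :: x' :: r, w, _, hc, hd => by
    have ih := splitRuns_append w (List.cons_ne_nil x' r) (List.isChain_cons_cons.1 hc).2
      (by simpa [LastGtHead, List.getLast?_cons_cons] using hd)
    rw [List.cons_append] at ih
    rw [List.cons_append, List.cons_append, splitRuns_cons_cons_of_eq ih,
      if_pos (List.isChain_cons_cons.1 hc).1]

theorem splitRuns_flatten : ∀ {l : List (List ℕ)}, (∀ r ∈ l, r ≠ []) →
    (∀ r ∈ l, r.IsChain (· ≤ ·)) → l.IsChain LastGtHead → splitRuns l.flatten = l
  | [], _, _, _ => rfl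
  | r :: l, hne, hc, hd => by
    rw [List.flatten_cons, splitRuns_append _ (hne r List.mem_cons_self) (hc r List.mem_cons_self),
      splitRuns_flatten (fun s hs => hne s (List.mem_cons_of_mem _ hs))
        (fun s hs => hc s (List.mem_cons_of_mem _ hs)) (List.isChain_cons.1 hd).2]
    rcases l with _ | ⟨s, l⟩
    · simp [LastGtHead]
    · intro a ha b hb
      rw [List.flatten_cons, List.head?_append_of_ne_nil _ (hne s (by simp))] at hb
      exact (List.isChain_cons.1 hd).1 s rfl a ha b hb

theorem des_cons_cons (x y : ℕ) (l : List ℕ) :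
    des (x :: y :: l) = des (y :: l) + if y < x then 1 else 0 := by
  simp only [des, List.tail_cons, List.zip_cons_cons, List.filter_cons]
  split_ifs <;> simp_all

theorem length_splitRuns : ∀ {w : List ℕ}, w ≠ [] → (splitRuns w).length = des w + 1
  | [_], _ => rfl
  | x :: y :: rest, _ => by
    obtain ⟨r, rs, h⟩ := exists_splitRuns_cons y rest
    have ih := length_splitRuns (List.cons_ne_nil y rest)
    rw [h] at ih
    rw [splitRuns_cons_cons_of_eq h, des_cons_cons]
    split_ifs <;> simp only [List.length_cons] at ih ⊢ <;> omega

end Runs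

section RunSorted

theorem eq_of_perm_of_flatten_eq {α : Type*} :
    ∀ {l₁ l₂ : List (List α)}, l₁.Perm l₂ → l₁.flatten = l₂.flatten → l₁.flatten.Nodup →
      (∀ r ∈ l₁, r ≠ []) → l₁ = l₂
  | [], _, hp, _, _, _ => hp.nil_eq
  | _ :: _, [], hp, _, _, _ => hp.eq_nil
  | r :: l₁, s :: l₂, hp, hfl, hnd, hne => by
    obtain ⟨a, r', rfl⟩ := List.exists_cons_of_ne_nil (hne r List.mem_cons_self)
    by_cases hrs : a :: r' = s
    · subst hrs
      rw [List.flatten_cons, List.flatten_cons] at hfl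
      rw [List.flatten_cons, List.nodup_append] at hnd
      rw [eq_of_perm_of_flatten_eq hp.cons_inv (List.append_cancel_left hfl) hnd.2.1
        (fun t ht => hne t (List.mem_cons_of_mem _ ht))]
    · -- both lists start with the letter `a`, which then occurs twice in the nodup flattening
      exfalso
      have hr : a :: r' ∈ l₂ := (List.mem_cons.1 (hp.subset List.mem_cons_self)).resolve_left hrs
      obtain ⟨b, s', rfl⟩ := List.exists_cons_of_ne_nil
        (hne _ (hp.symm.subset List.mem_cons_self))
      simp only [List.flatten_cons, List.cons_append, List.cons.injEq] at hfl hnd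
      obtain ⟨rfl, hfl⟩ := hfl
      rw [hfl, List.nodup_cons, List.mem_append, not_or] at hnd
      exact hnd.1.2 (List.mem_flatten.2 ⟨_, hr, List.mem_cons_self⟩)

theorem isRunSorted_iff_pairwise {w : List ℕ} (hw : w.Nodup) :
    IsRunSorted w ↔ (splitRuns w).Pairwise (· ≤ ·) := by
  have hsorted : ((splitRuns w).mergeSort lexLe).Pairwise (· ≤ ·) :=
    (List.pairwise_mergeSort (le := lexLe) (fun a b c hab hbc => lexLe_iff_le.2
        (le_trans (lexLe_iff_le.1 hab) (lexLe_iff_le.1 hbc)))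
      (fun a b => by simpa only [Bool.or_eq_true, lexLe_iff_le] using le_total a b) _).imp
      lexLe_iff_le.1
  constructor
  · intro h
    have hfl : ((splitRuns w).mergeSort lexLe).flatten = (splitRuns w).flatten := by
      rw [flatten_splitRuns]; exact h
    have hperm := List.mergeSort_perm (splitRuns w) lexLe
    rwa [← eq_of_perm_of_flatten_eq hperm hfl (by rwa [hfl, flatten_splitRuns])
      (fun r hr => ne_nil_of_mem_splitRuns (hperm.subset hr))]
  · intro h
    rw [IsRunSorted, runsort, List.mergeSort_of_pairwise (h.imp lexLe_iff_le.2), flatten_splitRuns]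

theorem head_le_head_of_cons_le {a b : ℕ} {l l' : List ℕ} (h : a :: l ≤ b :: l') : a ≤ b :=
  h.lt_or_eq.elim List.head_le_of_lt fun h => (List.cons.inj h).1.le

theorem head_le_of_isRunSorted {w : List ℕ} (hw : w.Nodup) (hrs : IsRunSorted w) {a x : ℕ}
    (ha : a ∈ w.head?) (hx : x ∈ w) : a ≤ x := by
  obtain ⟨w', rfl⟩ := List.head?_eq_some_iff.1 ha
  obtain ⟨r, rs, h⟩ := exists_splitRuns_cons a w'
  have hsorted := (isRunSorted_iff_pairwise hw).1 hrs
  rw [h] at hsorted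
  rw [← flatten_splitRuns (a :: w'), List.mem_flatten] at hx
  obtain ⟨s, hs, hxs⟩ := hx
  obtain ⟨b, s', rfl⟩ := List.exists_cons_of_ne_nil (ne_nil_of_mem_splitRuns hs)
  have hbx : b ≤ x := le_of_mem_head? (pairwise_of_mem_splitRuns hs) rfl hxs
  rw [h] at hs
  rcases List.mem_cons.1 hs with hs | hs
  · exact (List.cons.inj hs).1 ▸ hbx
  · exact (head_le_head_of_cons_le (List.rel_of_pairwise_cons hsorted hs)).trans hbx

end RunSorted

section Relabel

variable {f : ℕ → ℕ} {s : Set ℕ}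

theorem map_invFunOn_map (hf : s.InjOn f) {w : List ℕ} (hw : ∀ x ∈ w, x ∈ s) :
    (w.map f).map (Function.invFunOn f s) = w := by
  rw [List.map_map]
  exact (List.map_congr_left fun x hx => hf.leftInvOn_invFunOn (hw x hx)).trans (List.map_id w)

theorem splitRuns_map (hf : StrictMonoOn f s) :
    ∀ {w : List ℕ}, (∀ x ∈ w, x ∈ s) → splitRuns (w.map f) = (splitRuns w).map (List.map f)
  | [], _ => rfl
  | [_], _ => rfl
  | x :: y :: rest, hw => by
    obtain ⟨r, rs, h⟩ := exists_splitRuns_cons y rest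
    have ih := splitRuns_map hf (w := y :: rest) (fun z hz => hw z (List.mem_cons_of_mem _ hz))
    rw [h, List.map_cons, List.map_cons, List.map_cons] at ih
    rw [List.map_cons, List.map_cons, splitRuns_cons_cons_of_eq ih, splitRuns_cons_cons_of_eq h]
    by_cases hxy : x ≤ y
    · simp [hxy, (hf.le_iff_le (hw x (by simp)) (hw y (by simp))).2 hxy]
    · simp [hxy, mt (hf.le_iff_le (hw x (by simp)) (hw y (by simp))).1 hxy]

theorem lexLe_map (hf : StrictMonoOn f s) :
    ∀ {a b : List ℕ}, (∀ x ∈ a, x ∈ s) → (∀ x ∈ b, x ∈ s) →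
      lexLe (a.map f) (b.map f) = lexLe a b
  | [], _, _, _ => rfl
  | _ :: _, [], _, _ => rfl
  | x :: a, y :: b, ha, hb => by
    have hx := ha x List.mem_cons_self
    have hy := hb y List.mem_cons_self
    have hbeq : (f x == f y) = (x == y) := by
      rw [Bool.eq_iff_iff, beq_iff_eq, beq_iff_eq, hf.injOn.eq_iff hx hy]
    simp only [List.map_cons, lexLe, hf.lt_iff_lt hx hy, hbeq,
      lexLe_map hf (fun z hz => ha z (List.mem_cons_of_mem _ hz))
        (fun z hz => hb z (List.mem_cons_of_mem _ hz))]

theorem runsort_perm (w : List ℕ) : (runsort w).Perm w := by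
  rw [runsort]
  simpa only [flatten_splitRuns] using (List.mergeSort_perm (splitRuns w) lexLe).flatten

theorem runsort_map (hf : StrictMonoOn f s) {w : List ℕ} (hw : ∀ x ∈ w, x ∈ s) :
    runsort (w.map f) = (runsort w).map f := by
  have hruns : ∀ r ∈ splitRuns w, ∀ x ∈ r, x ∈ s :=
    fun r hr x hx => hw x (mem_of_mem_splitRuns hr hx)
  rw [runsort, runsort, splitRuns_map hf hw, List.map_flatten,
    List.map_mergeSort fun a ha b hb => (lexLe_map hf (hruns a ha) (hruns b hb)).symm]

theorem isRunSorted_map (hf : StrictMonoOn f s) {w : List ℕ} (hw : ∀ x ∈ w, x ∈ s) :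
    IsRunSorted (w.map f) ↔ IsRunSorted w := by
  rw [IsRunSorted, IsRunSorted, runsort_map hf hw]
  refine ⟨fun h => ?_, fun h => by rw [h]⟩
  have := congrArg (List.map (Function.invFunOn f s)) h
  rwa [map_invFunOn_map hf.injOn hw,
    map_invFunOn_map hf.injOn fun x hx => hw x ((runsort_perm w).subset hx)] at this

theorem des_map (hf : StrictMonoOn f s) {w : List ℕ} (hw : ∀ x ∈ w, x ∈ s) :
    des (w.map f) = des w := by
  rcases eq_or_ne w [] with rfl | hne
  · rfl
  have h := length_splitRuns (w := w.map f) (by simpa using hne)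
  rw [splitRuns_map hf hw, List.length_map, length_splitRuns hne] at h
  omega

end Relabel

section Words

def words (S : Finset ℕ) : Finset (List ℕ) := S.sort.permutations.toFinset

variable {S : Finset ℕ} {w : List ℕ}

theorem mem_words : w ∈ words S ↔ w.Perm S.sort := by
  rw [words, List.mem_toFinset, List.mem_permutations]

theorem mem_words_iff : w ∈ words S ↔ w.Nodup ∧ w.toFinset = S := by
  rw [mem_words]
  refine ⟨fun h => ⟨h.nodup_iff.2 (sort_nodup S _), ?_⟩, fun ⟨hnd, hS⟩ => ?_⟩
  · rw [List.toFinset_eq_of_perm _ _ h, sort_toFinset]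
  · exact List.perm_of_nodup_nodup_toFinset_eq hnd (sort_nodup S _) (by rw [hS, sort_toFinset])

theorem mem_iff_of_mem_words (hw : w ∈ words S) {x : ℕ} : x ∈ w ↔ x ∈ S := by
  rw [← List.mem_toFinset, (mem_words_iff.1 hw).2]

theorem card_words (S : Finset ℕ) : #(words S) = (#S).factorial := by
  rw [words, List.toFinset_card_of_nodup (List.nodup_permutations _ (sort_nodup S _)),
    List.length_permutations, length_sort]

def runSortedWords (S : Finset ℕ) : Finset (List ℕ) := (words S).filter IsRunSorted

noncomputable def descentPoly (S : Finset ℕ) : ℝ[X] := ∑ w ∈ runSortedWords S, X ^ des w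

theorem permWord_injective (n : ℕ) : Function.Injective (permWord (n := n)) := by
  intro σ τ h
  ext i
  simpa [permWord] using congrFun (List.ofFn_injective h) i

theorem permWord_mem_words {n : ℕ} (σ : Equiv.Perm (Fin n)) : permWord σ ∈ words (Icc 1 n) := by
  have hnd : (permWord σ).Nodup :=
    List.nodup_ofFn.2 fun i j h => σ.injective (Fin.ext (by simpa using h))
  refine mem_words_iff.2 ⟨hnd, eq_of_subset_of_card_le (fun x hx => ?_) ?_⟩
  · obtain ⟨i, rfl⟩ := List.mem_ofFn.1 (List.mem_toFinset.1 hx)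
    simp
  · rw [List.toFinset_card_of_nodup hnd, permWord, List.length_ofFn, Nat.card_Icc,
      Nat.add_sub_cancel]

theorem image_permWord (n : ℕ) : univ.image (permWord (n := n)) = words (Icc 1 n) := by
  refine eq_of_subset_of_card_le (fun w hw => ?_) ?_
  · obtain ⟨σ, -, rfl⟩ := mem_image.1 hw
    exact permWord_mem_words σ
  · rw [card_words, card_image_of_injective _ (permWord_injective n), card_univ,
      Fintype.card_perm, Fintype.card_fin, Nat.card_Icc, Nat.add_sub_cancel]

theorem A_eq_descentPoly (n : ℕ) : A n = descentPoly (Icc 1 n) := by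
  rw [A, descentPoly, runSortedWords, ← image_permWord, filter_image,
    sum_image (permWord_injective n).injOn]

variable {f : ℕ → ℕ}

theorem sort_image (hf : StrictMonoOn f S) : (S.image f).sort = S.sort.map f := by
  have hnd : (S.sort.map f).Nodup :=
    (sort_nodup S _).map_on fun x hx y hy => hf.injOn ((mem_sort _).1 hx) ((mem_sort _).1 hy)
  have hfin : (S.sort.map f).toFinset = S.image f := by ext; simp
  rw [← hfin]
  exact (List.toFinset_sort _ hnd).2 (List.pairwise_map.2 ((pairwise_sort S _).imp_of_mem
    fun hx hy hxy => (hf.le_iff_le ((mem_sort _).1 hx) ((mem_sort _).1 hy)).2 hxy))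

theorem map_mem_runSortedWords_iff (hf : StrictMonoOn f S) (hw : ∀ x ∈ w, x ∈ S) :
    w.map f ∈ runSortedWords (S.image f) ↔ w ∈ runSortedWords S := by
  rw [runSortedWords, runSortedWords, mem_filter, mem_filter, isRunSorted_map hf hw, mem_words,
    mem_words, sort_image hf]
  refine and_congr_left' ⟨fun h => ?_, fun h => h.map f⟩
  simpa only [map_invFunOn_map hf.injOn hw, map_invFunOn_map hf.injOn fun x hx => (mem_sort _).1 hx]
    using h.map (Function.invFunOn f S)

theorem descentPoly_image (hf : StrictMonoOn f S) : descentPoly (S.image f) = descentPoly S := by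
  have hletters : ∀ {T : Finset ℕ}, ∀ v ∈ runSortedWords T, ∀ x ∈ v, x ∈ T :=
    fun v hv x hx => (mem_iff_of_mem_words (mem_filter.1 hv).1).1 hx
  have hright : ∀ v ∈ runSortedWords (S.image f), (v.map (Function.invFunOn f S)).map f = v := by
    intro v hv
    rw [List.map_map]
    refine (List.map_congr_left fun y hy => ?_).trans (List.map_id v)
    obtain ⟨x, hx, rfl⟩ := mem_image.1 (hletters v hv y hy)
    exact Function.invFunOn_eq ⟨x, hx, rfl⟩
  have hinv : ∀ v ∈ runSortedWords (S.image f), ∀ x ∈ v.map (Function.invFunOn f S), x ∈ S := by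
    intro v hv x hx
    obtain ⟨y, hy, rfl⟩ := List.mem_map.1 hx
    obtain ⟨z, hz, rfl⟩ := mem_image.1 (hletters v hv y hy)
    exact Function.invFunOn_mem ⟨z, hz, rfl⟩
  symm
  refine sum_nbij' (List.map f) (List.map (Function.invFunOn f S))
    (fun w hw => (map_mem_runSortedWords_iff hf (hletters w hw)).2 hw)
    (fun v hv => (map_mem_runSortedWords_iff hf (hinv v hv)).1 (by rwa [hright v hv]))
    (fun w hw => map_invFunOn_map hf.injOn (hletters w hw)) hright
    (fun w hw => by rw [des_map hf (hletters w hw)])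

theorem descentPoly_range_card (S : Finset ℕ) : descentPoly (range #S) = descentPoly S := by
  have hfin : (Set.ofPred (· ∈ S)).Finite := S.finite_toSet
  have hcard : #hfin.toFinset = #S := by simp
  have himage : (range #S).image (Nat.nth (· ∈ S)) = S := by
    apply Finset.coe_injective
    rw [coe_image, coe_range, ← hcard, Nat.image_nth_Iio_card hfin]
    rfl
  have hf : StrictMonoOn (Nat.nth (· ∈ S)) (range #S) := by
    simpa [hcard] using Nat.nth_strictMonoOn hfin
  rw [← descentPoly_image hf, himage]

theorem descentPoly_congr {T : Finset ℕ} (h : #S = #T) : descentPoly S = descentPoly T := by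
  rw [← descentPoly_range_card S, h, descentPoly_range_card]

theorem A_card (S : Finset ℕ) : A #S = descentPoly S := by
  rw [A_eq_descentPoly]
  exact descentPoly_congr (by simp)

end Words

section FirstRun

theorem splitRuns_sort {S : Finset ℕ} (hS : S.Nonempty) : splitRuns S.sort = [S.sort] := by
  simpa [splitRuns] using splitRuns_append [] (List.ne_nil_of_mem ((mem_sort _).2 hS.choose_spec))
    (List.isChain_iff_pairwise.2 (pairwise_sort S _)) (by simp [LastGtHead])

theorem sort_mem_runSortedWords (S : Finset ℕ) : S.sort ∈ runSortedWords S := by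
  refine mem_filter.2 ⟨mem_words.2 (List.Perm.refl _), ?_⟩
  rcases S.eq_empty_or_nonempty with rfl | hS
  · simp [IsRunSorted, runsort, splitRuns]
  · simp [IsRunSorted, runsort, splitRuns_sort hS]

theorem des_sort (S : Finset ℕ) : des S.sort = 0 := by
  rcases S.eq_empty_or_nonempty with rfl | hS
  · simp [des]
  · have h := length_splitRuns (w := S.sort) (List.ne_nil_of_mem ((mem_sort _).2 hS.choose_spec))
    rw [splitRuns_sort hS, List.length_singleton] at h
    omega

/-- The sets `T` such that a run-sorted word on `S` can be `S \ T` in increasing order followed by a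
run-sorted word on `T`: the first letter must be smaller than every later one (so that the first
run comes first lexicographically), and the first run must end with a descent. -/
def tailSets (S : Finset ℕ) : Finset (Finset ℕ) :=
  S.powerset.filter fun T => (∃ a ∈ S \ T, ∀ b ∈ T, a < b) ∧ ∃ a ∈ S \ T, ∃ b ∈ T, b < a

def dropFirstRun (w : List ℕ) : List ℕ := (splitRuns w).tail.flatten

variable {S T : Finset ℕ} {v w : List ℕ}

theorem splitRuns_sort_sdiff_append (hT : T ∈ tailSets S) (hv : v ∈ runSortedWords T) :
    splitRuns ((S \ T).sort ++ v) = (S \ T).sort :: splitRuns v := by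
  obtain ⟨-, -, a, ha, b, hb, hba⟩ := mem_filter.1 hT
  obtain ⟨hvw, hvrs⟩ := mem_filter.1 hv
  have hvnd := (mem_words_iff.1 hvw).1
  refine splitRuns_append v (List.ne_nil_of_mem ((mem_sort _).2 ha))
    (List.isChain_iff_pairwise.2 (pairwise_sort _ _)) fun c hc d hd => ?_
  calc d ≤ b := head_le_of_isRunSorted hvnd hvrs hd ((mem_iff_of_mem_words hvw).2 hb)
    _ < a := hba
    _ ≤ c := le_of_mem_getLast? (pairwise_sort _ _) hc ((mem_sort _).2 ha)

theorem sort_sdiff_append_mem_runSortedWords (hT : T ∈ tailSets S) (hv : v ∈ runSortedWords T) :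
    (S \ T).sort ++ v ∈ runSortedWords S := by
  obtain ⟨hTS, ⟨a, ha, hlt⟩, -⟩ := mem_filter.1 hT
  obtain ⟨hvw, hvrs⟩ := mem_filter.1 hv
  obtain ⟨hvnd, hvT⟩ := mem_words_iff.1 hvw
  have hnd : ((S \ T).sort ++ v).Nodup := List.nodup_append.2 ⟨sort_nodup _ _, hvnd,
    fun x hx y hy hxy =>
      (mem_sdiff.1 ((mem_sort _).1 hx)).2 (hxy ▸ (mem_iff_of_mem_words hvw).1 hy)⟩
  refine mem_filter.2 ⟨mem_words_iff.2 ⟨hnd, ?_⟩, ?_⟩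
  · rw [List.toFinset_append, sort_toFinset, hvT, sdiff_union_of_subset (mem_powerset.1 hTS)]
  · rw [isRunSorted_iff_pairwise hnd, splitRuns_sort_sdiff_append hT hv, List.pairwise_cons]
    refine ⟨fun r hr => ?_, (isRunSorted_iff_pairwise hvnd).1 hvrs⟩
    obtain ⟨b, r', rfl⟩ := List.exists_cons_of_ne_nil (ne_nil_of_mem_splitRuns hr)
    have haS : a ∈ (S \ T).sort := (mem_sort _).2 ha
    obtain ⟨c, u, hu⟩ := List.exists_cons_of_ne_nil (List.ne_nil_of_mem haS)
    have hca : c ≤ a := le_of_mem_head? (pairwise_sort _ _) (by simp [hu]) haS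
    rw [hu]
    exact le_of_lt (List.Lex.rel (hca.trans_lt (hlt b ((mem_iff_of_mem_words hvw).1
      (mem_of_mem_splitRuns hr List.mem_cons_self)))))

theorem des_sort_sdiff_append (hT : T ∈ tailSets S) (hv : v ∈ runSortedWords T) :
    des ((S \ T).sort ++ v) = des v + 1 := by
  obtain ⟨-, -, -, -, b, hb, -⟩ := mem_filter.1 hT
  have hv' : v ≠ [] := List.ne_nil_of_mem ((mem_iff_of_mem_words (mem_filter.1 hv).1).2 hb)
  have h := length_splitRuns (w := (S \ T).sort ++ v) (by simp [hv'])
  rw [splitRuns_sort_sdiff_append hT hv, List.length_cons, length_splitRuns hv'] at h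
  omega

theorem dropFirstRun_sort_sdiff_append (hT : T ∈ tailSets S) (hv : v ∈ runSortedWords T) :
    dropFirstRun ((S \ T).sort ++ v) = v := by
  rw [dropFirstRun, splitRuns_sort_sdiff_append hT hv, List.tail_cons, flatten_splitRuns]

theorem splitRuns_dropFirstRun (w : List ℕ) : splitRuns (dropFirstRun w) = (splitRuns w).tail :=
  splitRuns_flatten (fun _ hr => ne_nil_of_mem_splitRuns (List.mem_of_mem_tail hr))
    (fun _ hr => isChain_of_mem_splitRuns (List.mem_of_mem_tail hr))
    (isChain_lastGtHead_splitRuns w).tail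

theorem append_dropFirstRun {r : List ℕ} {rs : List (List ℕ)} (h : splitRuns w = r :: rs) :
    r ++ dropFirstRun w = w := by
  rw [dropFirstRun, h, List.tail_cons, ← List.flatten_cons, ← h, flatten_splitRuns]

theorem dropFirstRun_mem_runSortedWords (hw : w ∈ runSortedWords S) :
    dropFirstRun w ∈ runSortedWords (dropFirstRun w).toFinset := by
  obtain ⟨hww, hrs⟩ := mem_filter.1 hw
  have hwnd := (mem_words_iff.1 hww).1
  have hnd : (dropFirstRun w).Nodup := by
    refine hwnd.sublist ?_
    rw [dropFirstRun]
    simpa only [flatten_splitRuns] using (List.tail_sublist (splitRuns w)).flatten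
  refine mem_filter.2 ⟨mem_words_iff.2 ⟨hnd, rfl⟩, ?_⟩
  rw [isRunSorted_iff_pairwise hnd, splitRuns_dropFirstRun]
  exact ((isRunSorted_iff_pairwise hwnd).1 hrs).sublist (List.tail_sublist _)

theorem sdiff_toFinset_dropFirstRun {r : List ℕ} {rs : List (List ℕ)} (hw : w ∈ words S)
    (h : splitRuns w = r :: rs) : S \ (dropFirstRun w).toFinset = r.toFinset := by
  obtain ⟨hnd, rfl⟩ := mem_words_iff.1 hw
  have e := append_dropFirstRun h
  generalize dropFirstRun w = v at e ⊢
  subst e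
  rw [List.toFinset_append, union_sdiff_cancel_right]
  exact List.disjoint_toFinset_iff_disjoint.2 (List.nodup_append'.1 hnd).2.2

theorem sort_sdiff_append_dropFirstRun (hw : w ∈ runSortedWords S) :
    (S \ (dropFirstRun w).toFinset).sort ++ dropFirstRun w = w := by
  have hww := (mem_filter.1 hw).1
  rcases w with _ | ⟨a, w⟩
  · obtain ⟨-, rfl⟩ := mem_words_iff.1 hww
    simp [dropFirstRun, splitRuns]
  obtain ⟨r, rs, h⟩ := exists_splitRuns_cons a w
  have hrnd : (a :: r).Nodup := by
    have := (mem_words_iff.1 hww).1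
    rw [← append_dropFirstRun h] at this
    exact (List.nodup_append.1 this).1
  rw [sdiff_toFinset_dropFirstRun hww h,
    (List.toFinset_sort _ hrnd).2 (pairwise_of_mem_splitRuns (h ▸ List.mem_cons_self)),
    append_dropFirstRun h]

theorem toFinset_dropFirstRun_mem_tailSets (hw : w ∈ runSortedWords S) (hne : w ≠ S.sort) :
    (dropFirstRun w).toFinset ∈ tailSets S := by
  obtain ⟨hww, hrs⟩ := mem_filter.1 hw
  have hnd := (mem_words_iff.1 hww).1
  rcases w with _ | ⟨a, w⟩
  · obtain ⟨-, rfl⟩ := mem_words_iff.1 hww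
    simp at hne
  obtain ⟨r, rs, h⟩ := exists_splitRuns_cons a w
  have hST := sdiff_toFinset_dropFirstRun hww h
  rcases rs with _ | ⟨s, rs⟩
  · refine absurd ?_ hne
    simpa [dropFirstRun, h] using (sort_sdiff_append_dropFirstRun hw).symm
  obtain ⟨b, s, rfl⟩ := List.exists_cons_of_ne_nil (ne_nil_of_mem_splitRuns (w := a :: w)
    (h ▸ List.mem_cons_of_mem _ List.mem_cons_self))
  have hTS : (dropFirstRun (a :: w)).toFinset ⊆ S := fun x hx => (mem_iff_of_mem_words hww).1
    (by rw [← append_dropFirstRun h]; exact List.mem_append_right _ (List.mem_toFinset.1 hx))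
  have hbT : b ∈ (dropFirstRun (a :: w)).toFinset := by simp [dropFirstRun, h]
  have ha : a ∈ S \ (dropFirstRun (a :: w)).toFinset := by simp [hST]
  refine mem_filter.2 ⟨mem_powerset.2 hTS, ⟨a, ha, fun c hc => ?_⟩, ?_⟩
  · refine lt_of_le_of_ne (head_le_of_isRunSorted hnd hrs rfl ((mem_iff_of_mem_words hww).2
      (hTS hc))) ?_
    rintro rfl
    exact (mem_sdiff.1 ha).2 hc
  · refine ⟨(a :: r).getLast (List.cons_ne_nil a r), ?_, b, hbT, ?_⟩
    · rw [hST, List.mem_toFinset]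
      exact List.getLast_mem _
    have hd := isChain_lastGtHead_splitRuns (a :: w)
    rw [h] at hd
    exact (List.isChain_cons_cons.1 hd).1 _ (List.getLast?_eq_some_getLast _) b rfl


theorem descentPoly_eq_one_add_sum (S : Finset ℕ) :
    descentPoly S = 1 + ∑ T ∈ tailSets S, X * descentPoly T := by
  rw [descentPoly, ← add_sum_erase _ _ (sort_mem_runSortedWords S), des_sort, pow_zero]
  congr 1
  simp_rw [descentPoly, mul_sum, ← pow_succ']
  rw [sum_sigma']
  symm
  refine sum_nbij' (fun p => (S \ p.1).sort ++ p.2)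
    (fun w => ⟨(dropFirstRun w).toFinset, dropFirstRun w⟩) ?_ ?_ ?_ ?_ ?_
  · rintro ⟨T, v⟩ hp
    obtain ⟨hT, hv⟩ := mem_sigma.1 hp
    refine mem_erase.2 ⟨fun h => ?_, sort_sdiff_append_mem_runSortedWords hT hv⟩
    have := des_sort_sdiff_append hT hv
    rw [h, des_sort] at this
    omega
  · intro w hw
    obtain ⟨hne, hw⟩ := mem_erase.1 hw
    exact mem_sigma.2 ⟨toFinset_dropFirstRun_mem_tailSets hw hne,
      dropFirstRun_mem_runSortedWords hw⟩
  · rintro ⟨T, v⟩ hp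
    obtain ⟨hT, hv⟩ := mem_sigma.1 hp
    simp only [dropFirstRun_sort_sdiff_append hT hv, (mem_words_iff.1 (mem_filter.1 hv).1).2]
  · intro w hw
    exact sort_sdiff_append_dropFirstRun (mem_erase.1 hw).2
  · rintro ⟨T, v⟩ hp
    obtain ⟨hT, hv⟩ := mem_sigma.1 hp
    rw [des_sort_sdiff_append hT hv]

end FirstRun

section Counting

variable {S T : Finset ℕ}

def IsTopSet (S T : Finset ℕ) : Prop := T ⊆ S ∧ ∀ a ∈ S \ T, ∀ b ∈ T, a < b

theorem exists_isTopSet_card (S : Finset ℕ) : ∀ i ≤ #S, ∃ T, IsTopSet S T ∧ #T = i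
  | 0, _ => ⟨∅, ⟨empty_subset _, by simp⟩, card_empty⟩
  | i + 1, hi => by
    obtain ⟨T, ⟨hTS, htop⟩, rfl⟩ := exists_isTopSet_card S i (by omega)
    have hne : (S \ T).Nonempty := by
      rw [← card_pos, card_sdiff_of_subset hTS]
      omega
    have hmax := mem_sdiff.1 ((S \ T).max'_mem hne)
    refine ⟨insert ((S \ T).max' hne) T, ⟨insert_subset hmax.1 hTS, fun a ha b hb => ?_⟩,
      card_insert_of_notMem hmax.2⟩
    have haT : a ∈ S \ T := mem_sdiff.2 ⟨(mem_sdiff.1 ha).1, fun h => (mem_sdiff.1 ha).2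
      (mem_insert_of_mem h)⟩
    rcases mem_insert.1 hb with rfl | hb
    · exact lt_of_le_of_ne ((S \ T).le_max' a haT) fun h =>
        (mem_sdiff.1 ha).2 (h ▸ mem_insert_self _ _)
    · exact htop a haT b hb

theorem IsTopSet.eq_of_card_eq {T' : Finset ℕ} (hT : IsTopSet S T) (hT' : IsTopSet S T')
    (h : #T = #T') : T = T' := by
  by_contra hne
  obtain ⟨b, hb, hb'⟩ := not_subset.1 fun hsub => hne (eq_of_subset_of_card_le hsub h.ge)
  obtain ⟨c, hc, hc'⟩ := not_subset.1 fun hsub => hne (eq_of_subset_of_card_le hsub h.le).symm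
  exact lt_asymm (hT'.2 b (mem_sdiff.2 ⟨hT.1 hb, hb'⟩) c hc)
    (hT.2 c (mem_sdiff.2 ⟨hT'.1 hc, hc'⟩) b hb)

theorem mem_tailSets_iff (hS : S.Nonempty) :
    T ∈ tailSets S ↔ T ⊆ S.erase (S.min' hS) ∧ ¬ IsTopSet S T := by
  rw [tailSets, mem_filter, mem_powerset, subset_erase]
  constructor
  · rintro ⟨hTS, ⟨a, ha, hlt⟩, a', ha', b, hb, hba⟩
    exact ⟨⟨hTS, fun hm => (hlt _ hm).not_ge (S.min'_le a (mem_sdiff.1 ha).1)⟩,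
      fun htop => (htop.2 a' ha' b hb).not_gt hba⟩
  · rintro ⟨⟨hTS, hm⟩, hntop⟩
    refine ⟨hTS, ⟨S.min' hS, mem_sdiff.2 ⟨S.min'_mem hS, hm⟩, fun b hb =>
      lt_of_le_of_ne (S.min'_le b (hTS hb)) fun h => hm (h ▸ hb)⟩, ?_⟩
    by_contra h
    push Not at h
    exact hntop ⟨hTS, fun a ha b hb =>
      lt_of_le_of_ne (h a ha b hb) fun hab => (mem_sdiff.1 ha).2 (hab ▸ hb)⟩

theorem card_mem_Icc_of_mem_tailSets (hT : T ∈ tailSets S) : #T ∈ Icc 1 (#S - 2) := by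
  obtain ⟨-, -, a, ha, b, hb, -⟩ := mem_filter.1 hT
  have hS : S.Nonempty := ⟨a, (mem_sdiff.1 ha).1⟩
  obtain ⟨hsub, hntop⟩ := (mem_tailSets_iff hS).1 hT
  have hne : T ≠ S.erase (S.min' hS) := by
    rintro rfl
    refine hntop ⟨erase_subset _ _, fun c hc d hd => ?_⟩
    have hcm : c = S.min' hS := by
      by_contra h
      exact (mem_sdiff.1 hc).2 (mem_erase.2 ⟨h, (mem_sdiff.1 hc).1⟩)
    obtain ⟨hdm, hdS⟩ := mem_erase.1 hd
    exact hcm ▸ lt_of_le_of_ne (S.min'_le d hdS) (Ne.symm hdm)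
  have hlt := card_lt_card (Finset.ssubset_iff_subset_ne.2 ⟨hsub, hne⟩)
  rw [card_erase_of_mem (S.min'_mem hS)] at hlt
  exact mem_Icc.2 ⟨card_pos.2 ⟨b, hb⟩, by omega⟩

theorem card_filter_tailSets {i : ℕ} (hi : i ∈ Icc 1 (#S - 2)) :
    #{T ∈ tailSets S | #T = i} = (#S - 1).choose i - 1 := by
  obtain ⟨hi1, hi2⟩ := mem_Icc.1 hi
  have hS : S.Nonempty := card_pos.1 (by omega)
  obtain ⟨T₀, hT₀, hcard₀⟩ := exists_isTopSet_card S i (by omega)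
  have hm₀ : S.min' hS ∉ T₀ := by
    intro hm
    obtain ⟨a, ha⟩ : (S \ T₀).Nonempty := by
      rw [← card_pos, card_sdiff_of_subset hT₀.1]
      omega
    exact (hT₀.2 a ha _ hm).not_ge (S.min'_le a (mem_sdiff.1 ha).1)
  have hfilter : {T ∈ tailSets S | #T = i} = powersetCard i (S.erase (S.min' hS)) \ {T₀} := by
    ext T
    rw [mem_filter, mem_tailSets_iff hS, mem_sdiff, mem_powersetCard, mem_singleton]
    constructor
    · rintro ⟨⟨hsub, hntop⟩, hcard⟩
      exact ⟨⟨hsub, hcard⟩, fun h => hntop (h ▸ hT₀)⟩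
    · rintro ⟨⟨hsub, hcard⟩, hne⟩
      exact ⟨⟨hsub, fun htop => hne (htop.eq_of_card_eq hT₀ (hcard.trans hcard₀.symm))⟩, hcard⟩
  rw [hfilter, card_sdiff_of_subset (singleton_subset_iff.2 (mem_powersetCard.2
      ⟨subset_erase.2 ⟨hT₀.1, hm₀⟩, hcard₀⟩)), card_singleton, card_powersetCard,
    card_erase_of_mem (S.min'_mem hS)]

theorem sum_tailSets_card {M : Type*} [AddCommMonoid M] (S : Finset ℕ) (g : ℕ → M) :
    ∑ T ∈ tailSets S, g #T = ∑ i ∈ Icc 1 (#S - 2), ((#S - 1).choose i - 1) • g i := by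
  rw [← sum_fiberwise_of_maps_to fun T => card_mem_Icc_of_mem_tailSets (S := S) (T := T)]
  refine sum_congr rfl fun i hi => ?_
  rw [sum_congr rfl fun T hT => by rw [(mem_filter.1 hT).2], sum_const, card_filter_tailSets hi]

end Counting

theorem stmt3_general (n : ℕ) :
    A n = 1 + ∑ i ∈ Finset.Icc 1 (n-2),
      Polynomial.C (((n-1).choose i : ℝ) - 1) * Polynomial.X * A i := by
  rw [A_eq_descentPoly, descentPoly_eq_one_add_sum]
  simp_rw [← A_card]
  rw [sum_tailSets_card (g := fun i => X * A i), Nat.card_Icc, Nat.add_sub_cancel]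
  refine congrArg _ (sum_congr rfl fun i hi => ?_)
  have hchoose : 1 ≤ (n - 1).choose i := Nat.choose_pos (by simp at hi; omega)
  rw [nsmul_eq_mul, ← Polynomial.C_eq_natCast, Nat.cast_sub hchoose, Nat.cast_one, mul_assoc]

/-- `A n = 1 + ∑_{i=1}^{n-2} (C(n-1, i) − 1) t A i`. -/
theorem stmt3 (n : ℕ) (hn : 1 ≤ n) :
    A n = 1 + ∑ i ∈ Finset.Icc 1 (n-2),
      Polynomial.C (((n-1).choose i : ℝ) - 1) * Polynomial.X * A i :=
  stmt3_general n
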